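/- The second deformed Bessel function 𝒥_n^μ satisfies the recursion (x D_μ − [−n]_μ) 𝒥_n^μ(x) = x 𝒥_{n−1}^μ(x) for n ≥ 1. -/

import Mathlib

/-- The Dunkl operator `D_μ f(x) = f'(x) + μ (f(x) - f(-x))/x`. -/
noncomputable def dunkl (μ : ℝ) (f : ℝ → ℝ) (x : ℝ) : ℝ :=
  deriv f x + μ * (f x - f (-x)) / x

/-- The deformed integer `[n]_μ = n + μ (1 - (-1)^n)`. -/
noncomputable def dIdx (μ : ℝ) (n : ℕ) : ℝ := n + μ * (1 - (-1 : ℝ) ^ n)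

/-- The deformed factorial `[n]_μ!`. -/
noncomputable def dFact (μ : ℝ) : ℕ → ℝ
  | 0 => 1
  | n + 1 => dIdx μ (n + 1) * dFact μ n

/-- The second deformed Bessel function `𝒥_n^μ`. -/
noncomputable def J2mu (μ : ℝ) (n : ℕ) (x : ℝ) : ℝ :=
  ∑' k : ℕ, (-1 : ℝ) ^ k * (Nat.factorial (2 * k)) /
      ((Nat.factorial k) * (Nat.factorial (k + n)) * dFact μ (2 * k)) *
    (x / 2) ^ (2 * k + n)

/-!
`𝒥_n^μ` has the parity of `n`, so the difference part of `D_μ` contributes exactly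
`μ (1 - (-1)^n) 𝒥_n^μ` and the left-hand side reduces to `x 𝒥_n^μ' + n 𝒥_n^μ`. Differentiating the
series termwise (its coefficients are dominated by `1/k!` because `[m]_μ! ≥ m!` for `μ ≥ 0`), this is
`∑ 2 (k + n) c_{n,k} (x/2)^{2k+n}`, and `(k + n) c_{n,k} = c_{n-1,k}` gives `x 𝒥_{n-1}^μ`.
-/

open Nat

lemma mul_dunkl_of_apply_neg_eq {μ x s : ℝ} {f : ℝ → ℝ} (hf : f (-x) = s * f x) (hx : x ≠ 0) :
    x * dunkl μ f x = x * deriv f x + μ * (1 - s) * f x := by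
  rw [dunkl, hf]
  field_simp

section DeformedFactorial

variable {μ : ℝ}

lemma natCast_le_dIdx (hμ : 0 ≤ μ) (m : ℕ) : (m : ℝ) ≤ dIdx μ m := by
  have : (-1 : ℝ) ^ m ≤ 1 := by rcases neg_one_pow_eq_or ℝ m with h | h <;> simp [h]
  unfold dIdx
  nlinarith

lemma factorial_le_dFact (hμ : 0 ≤ μ) (m : ℕ) : (m ! : ℝ) ≤ dFact μ m := by
  induction m with
  | zero => simp [dFact]
  | succ m ih =>
    rw [factorial_succ, cast_mul, dFact]
    exact mul_le_mul (natCast_le_dIdx hμ _) ih (by positivity)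
      ((cast_nonneg _).trans (natCast_le_dIdx hμ _))

lemma dFact_pos (hμ : 0 ≤ μ) (m : ℕ) : 0 < dFact μ m :=
  (cast_pos.mpr (factorial_pos m)).trans_le (factorial_le_dFact hμ m)

end DeformedFactorial

section EvenShiftSeries

lemma summable_pow_two_mul_add_div_factorial (n : ℕ) (ρ : ℝ) :
    Summable fun k : ℕ => ρ ^ (2 * k + n) / k ! := by
  refine ((Real.summable_pow_div_factorial (ρ ^ 2)).mul_left (ρ ^ n)).congr fun k => ?_
  rw [pow_add, pow_mul]
  ring

lemma summable_mul_pow_two_mul_add_div_factorial (n : ℕ) {r : ℝ} (hr : 0 ≤ r) :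
    Summable fun k : ℕ => (2 * k + n : ℕ) * r ^ (2 * k + n) / k ! := by
  refine (summable_pow_two_mul_add_div_factorial n (2 * r)).of_nonneg_of_le
    (fun k => by positivity) fun k => ?_
  rw [mul_pow]
  gcongr
  exact_mod_cast (Nat.lt_two_pow_self).le

variable {a : ℕ → ℝ}

lemma summable_mul_pow_two_mul_add (ha : ∀ k, |a k| ≤ (k ! : ℝ)⁻¹) (n : ℕ) (y : ℝ) :
    Summable fun k : ℕ => a k * y ^ (2 * k + n) := by
  refine (summable_pow_two_mul_add_div_factorial n |y|).of_norm_bounded fun k => ?_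
  rw [Real.norm_eq_abs, abs_mul, abs_pow, div_eq_inv_mul]
  gcongr
  exact ha k

lemma hasDerivAt_tsum_mul_pow_two_mul_add (ha : ∀ k, |a k| ≤ (k ! : ℝ)⁻¹) (n : ℕ) (y : ℝ) :
    HasDerivAt (fun y => ∑' k, a k * y ^ (2 * k + n))
      (∑' k, a k * ((2 * k + n : ℕ) * y ^ (2 * k + n - 1))) y := by
  set r := |y| + 1
  refine hasDerivAt_tsum_of_isPreconnected
    (summable_mul_pow_two_mul_add_div_factorial n (by positivity : 0 ≤ r))
    Metric.isOpen_ball (convex_ball 0 r).isPreconnected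
    (fun k z _ => (hasDerivAt_pow _ z).const_mul (a k)) (fun k z hz => ?_)
    (by simp [r]) (summable_mul_pow_two_mul_add ha n y) (by simp [r])
  have hz : |z| ≤ r := by simpa using (mem_ball_zero_iff.mp hz).le
  have hr : 1 ≤ r := by simp [r]
  rw [Real.norm_eq_abs, abs_mul, abs_mul, abs_pow, Nat.abs_cast, div_eq_inv_mul]
  gcongr
  · exact ha k
  · exact (pow_le_pow_left₀ (abs_nonneg z) hz _).trans (pow_le_pow_right₀ hr (Nat.sub_le _ 1))

lemma summable_mul_natCast_mul_pow_two_mul_add (ha : ∀ k, |a k| ≤ (k ! : ℝ)⁻¹) (n : ℕ) (y : ℝ) :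
    Summable fun k : ℕ => a k * ((2 * k + n : ℕ) * y ^ (2 * k + n)) := by
  refine (summable_mul_pow_two_mul_add_div_factorial n (abs_nonneg y)).of_norm_bounded fun k => ?_
  rw [Real.norm_eq_abs, abs_mul, abs_mul, abs_pow, Nat.abs_cast, div_eq_inv_mul]
  gcongr
  exact ha k

lemma mul_tsum_natCast_mul_pow_sub_one (N : ℕ → ℕ) (y : ℝ) :
    y * ∑' k, a k * (N k * y ^ (N k - 1)) = ∑' k, a k * (N k * y ^ N k) := by
  rw [← tsum_mul_left]
  congr 1 with k
  rcases eq_or_ne (N k) 0 with h | h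
  · simp [h]
  · rw [← mul_pow_sub_one h y]
    ring

end EvenShiftSeries

section BesselSeries

variable {μ : ℝ}

noncomputable def besselCoeff (μ : ℝ) (n k : ℕ) : ℝ :=
  (-1 : ℝ) ^ k * (2 * k)! / (k ! * (k + n)! * dFact μ (2 * k))

lemma J2mu_eq_tsum (μ : ℝ) (n : ℕ) (x : ℝ) :
    J2mu μ n x = ∑' k, besselCoeff μ n k * (x / 2) ^ (2 * k + n) := rfl

lemma abs_besselCoeff_le (hμ : 0 ≤ μ) (n k : ℕ) : |besselCoeff μ n k| ≤ (k ! : ℝ)⁻¹ := by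
  have hd := dFact_pos hμ (2 * k)
  have hkn : (1 : ℝ) ≤ (k + n)! := mod_cast (k + n).factorial_pos
  calc |besselCoeff μ n k| = (2 * k)! / (k ! * (k + n)! * dFact μ (2 * k)) := by
        rw [besselCoeff, abs_div, abs_mul, abs_pow, abs_neg, abs_one, one_pow, one_mul,
          Nat.abs_cast, abs_of_pos (by positivity)]
    _ ≤ dFact μ (2 * k) / (k ! * 1 * dFact μ (2 * k)) := by
        gcongr
        exact factorial_le_dFact hμ _
    _ = (k ! : ℝ)⁻¹ := by field_simp

lemma besselCoeff_succ_mul (μ : ℝ) (m k : ℕ) :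
    besselCoeff μ (m + 1) k * (k + m + 1) = besselCoeff μ m k := by
  have hk : (k + m + 1 : ℝ) ≠ 0 := by positivity
  rw [besselCoeff, besselCoeff, ← add_assoc, factorial_succ]
  push_cast
  field_simp

lemma J2mu_neg (μ : ℝ) (n : ℕ) (x : ℝ) : J2mu μ n (-x) = (-1) ^ n * J2mu μ n x := by
  rw [J2mu_eq_tsum, J2mu_eq_tsum, ← tsum_mul_left]
  congr 1 with k
  rw [neg_div, neg_pow, pow_add, pow_mul]
  ring

lemma mul_deriv_J2mu (hμ : 0 ≤ μ) (n : ℕ) (x : ℝ) :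
    x * deriv (J2mu μ n) x =
      ∑' k, besselCoeff μ n k * ((2 * k + n : ℕ) * (x / 2) ^ (2 * k + n)) := by
  have hF := hasDerivAt_tsum_mul_pow_two_mul_add (abs_besselCoeff_le hμ n) n (x / 2)
  have hJ : HasDerivAt (J2mu μ n) _ x := (hF.comp x ((hasDerivAt_id' x).div_const 2) :)
  rw [hJ.deriv, ← mul_tsum_natCast_mul_pow_sub_one]
  ring

lemma mul_deriv_J2mu_add (hμ : 0 ≤ μ) (m : ℕ) (x : ℝ) :
    x * deriv (J2mu μ (m + 1)) x + (m + 1) * J2mu μ (m + 1) x = x * J2mu μ m x := by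
  rw [mul_deriv_J2mu hμ, J2mu_eq_tsum, J2mu_eq_tsum, ← tsum_mul_left, ← tsum_mul_left,
    ← Summable.tsum_add
      (summable_mul_natCast_mul_pow_two_mul_add (abs_besselCoeff_le hμ _) _ _)
      ((summable_mul_pow_two_mul_add (abs_besselCoeff_le hμ _) _ _).mul_left _)]
  congr 1 with k
  rw [← besselCoeff_succ_mul μ m k]
  push_cast
  ring

end BesselSeries

/-- The recursion `(x D_μ - [-n]_μ) 𝒥_n^μ(x) = x 𝒥_{n-1}^μ(x)` for `n ≥ 1`. -/
theorem J2mu_recursion (μ : ℝ) (hμ : 0 ≤ μ) (n : ℕ) (hn : 1 ≤ n) (x : ℝ) (hx : x ≠ 0) :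
    x * dunkl μ (J2mu μ n) x - ((-(n : ℝ)) + μ * (1 - (-1 : ℝ) ^ n)) * J2mu μ n x =
      x * J2mu μ (n - 1) x := by
  obtain ⟨m, rfl⟩ : ∃ m, n = m + 1 := ⟨n - 1, by omega⟩
  rw [mul_dunkl_of_apply_neg_eq (J2mu_neg μ (m + 1) x) hx, add_tsub_cancel_right]
  push_cast
  linear_combination mul_deriv_J2mu_add hμ m x
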